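/- Fix k, θ, ξ, y₀ > 0, a horizon T > 0, an integer N ≥ 1, and set δt = T/N. Let Z₀, …, Z_{N−1} be i.i.d. standard normal random variables on a probability space and define ỹ₀ = y₀ and ỹ_{n+1} = ỹ_n + k(θ − ỹ_n⁺)·δt + ξ·√(ỹ_n⁺)·√(δt)·Z_n for 0 ≤ n < N, where x⁺ = max(x,0). Let ε > 0 satisfy ε·ξ² ≤ 2k and define Γ_n = exp( Σ_{i=0}^{n−1} ( −ε·k·δt·ỹ_i⁺ + ε·ξ·√(ỹ_i⁺·δt)·Z_i ) ) for 0 ≤ n ≤ N (with Γ₀ = 1). Then E[Γ_n] ≤ 1 for every 0 ≤ n ≤ N. -/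

import Mathlib

/-!
Write `Γ_{n+1} = Γ_n · exp(−εkδt ỹ_n⁺ + εξ√(ỹ_n⁺ δt) Z_n)`. Both `Γ_n` and `ỹ_n` are functions of
`Z_0, …, Z_{n−1}`, hence independent of the standard Gaussian `Z_n`, so integrating out `Z_n`
replaces `exp(a Z_n)` by `exp(a² / 2)`. Since `εξ² ≤ 2k`, the gain `ε²ξ² ỹ_n⁺ δt / 2` is absorbed
by the drift term `εkδt ỹ_n⁺`, whence `E[Γ_{n+1}] ≤ E[Γ_n] ≤ … ≤ Γ_0 = 1`.
-/

open MeasureTheory ProbabilityTheory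

lemma lintegral_ofReal_exp_mul_gaussianReal (m : ℝ) (v : NNReal) (t : ℝ) :
    ∫⁻ x, ENNReal.ofReal (Real.exp (t * x)) ∂gaussianReal m v
      = ENNReal.ofReal (Real.exp (m * t + v * t ^ 2 / 2)) := by
  rw [← ofReal_integral_eq_lintegral_ofReal (integrable_exp_mul_gaussianReal t)
    (ae_of_all _ fun _ => (Real.exp_pos _).le), ← congrFun mgf_fun_id_gaussianReal t]
  rfl

lemma lintegral_exp_add_mul_of_indepFun_gaussianReal {Ω β : Type*} [MeasurableSpace Ω]
    [MeasurableSpace β] {μ : Measure Ω} [IsProbabilityMeasure μ] {X : Ω → β} {G : Ω → ℝ}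
    {m : ℝ} {v : NNReal} (hX : AEMeasurable X μ) (hXG : IndepFun X G μ)
    (hG : μ.map G = gaussianReal m v) {c a : β → ℝ} (hc : Measurable c) (ha : Measurable a) :
    ∫⁻ ω, ENNReal.ofReal (Real.exp (c (X ω) + a (X ω) * G ω)) ∂μ
      = ∫⁻ ω, ENNReal.ofReal (Real.exp (c (X ω) + m * a (X ω) + v * a (X ω) ^ 2 / 2)) ∂μ := by
  have hGm : AEMeasurable G μ :=
    aemeasurable_of_map_neZero (hG ▸ inferInstance)
  have hlaw : μ.map (fun ω => (X ω, G ω)) = (μ.map X).prod (gaussianReal m v) := by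
    rw [← hG]; exact (indepFun_iff_map_prod_eq_prod_map_map hX hGm).mp hXG
  have hfactor : ∀ y z, ENNReal.ofReal (Real.exp (c y + a y * z))
      = ENNReal.ofReal (Real.exp (c y)) * ENNReal.ofReal (Real.exp (a y * z)) := fun y z => by
    rw [Real.exp_add, ENNReal.ofReal_mul (Real.exp_pos _).le]
  calc ∫⁻ ω, ENNReal.ofReal (Real.exp (c (X ω) + a (X ω) * G ω)) ∂μ
      = ∫⁻ p, ENNReal.ofReal (Real.exp (c p.1 + a p.1 * p.2)) ∂μ.map (fun ω => (X ω, G ω)) :=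
        (lintegral_map' (f := fun p => ENNReal.ofReal (Real.exp (c p.1 + a p.1 * p.2)))
          (by fun_prop) (hX.prodMk hGm)).symm
    _ = ∫⁻ y, ∫⁻ z, ENNReal.ofReal (Real.exp (c y + a y * z)) ∂gaussianReal m v ∂μ.map X := by
        rw [hlaw, lintegral_prod _ (by fun_prop)]
    _ = ∫⁻ y, ENNReal.ofReal (Real.exp (c y + m * a y + v * a y ^ 2 / 2)) ∂μ.map X := by
        refine lintegral_congr fun y => ?_
        simp only [hfactor]
        rw [lintegral_const_mul _ (by fun_prop), lintegral_ofReal_exp_mul_gaussianReal,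
          ← ENNReal.ofReal_mul (Real.exp_pos _).le, ← Real.exp_add, add_assoc]
    _ = _ := lintegral_map'
          (f := fun y => ENNReal.ofReal (Real.exp (c y + m * a y + v * a y ^ 2 / 2)))
          (by fun_prop) hX

lemma ProbabilityTheory.iIndepFun.indepFun_prefix_of_lt {Ω : Type*} [MeasurableSpace Ω]
    {μ : Measure Ω} {Z : ℕ → Ω → ℝ} {N n : ℕ} (hZ : iIndepFun (fun i : Fin N => Z i) μ)
    (hZm : ∀ i : Fin N, AEMeasurable (Z i) μ) (hn : n < N) :
    IndepFun (fun ω (i : Fin n) => Z i ω) (Z n) μ := by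
  let S : Finset (Fin N) := Finset.univ.filter fun i => (i : ℕ) < n
  have hST : Disjoint S {⟨n, hn⟩} := by simp [S]
  have hφ : Measurable fun (u : S → ℝ) (i : Fin n) => u ⟨⟨i, i.2.trans hn⟩, by simp [S]⟩ :=
    measurable_pi_lambda _ fun _ => measurable_pi_apply _
  have hψ : Measurable fun (u : ({⟨n, hn⟩} : Finset (Fin N)) → ℝ) =>
      u ⟨⟨n, hn⟩, Finset.mem_singleton_self _⟩ :=
    measurable_pi_apply _
  exact (hZ.indepFun_finset₀ S {⟨n, hn⟩} hST hZm).comp hφ hψ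

noncomputable section

def fteStep (k θ ξ δt y z : ℝ) : ℝ :=
  y + k * (θ - max y 0) * δt + ξ * Real.sqrt (max y 0) * Real.sqrt δt * z

/-- `fteChain … n z` is `ỹ_n` and `fteExponent … n z` is `log Γ_n`, as functions of the noise
vector `z = (Z_0, …, Z_{n−1})`. -/
def fteChain (k θ ξ y₀ δt : ℝ) : (n : ℕ) → (Fin n → ℝ) → ℝ
  | 0, _ => y₀
  | n + 1, z => fteStep k θ ξ δt (fteChain k θ ξ y₀ δt n (Fin.init z)) (z (Fin.last n))

def fteExponentIncrement (k ξ δt ε y z : ℝ) : ℝ :=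
  -(ε * k * δt * max y 0) + ε * ξ * Real.sqrt (max y 0 * δt) * z

def fteExponent (k θ ξ y₀ δt ε : ℝ) : (n : ℕ) → (Fin n → ℝ) → ℝ
  | 0, _ => 0
  | n + 1, z => fteExponent k θ ξ y₀ δt ε n (Fin.init z)
      + fteExponentIncrement k ξ δt ε (fteChain k θ ξ y₀ δt n (Fin.init z)) (z (Fin.last n))

end

@[fun_prop]
lemma measurable_fteChain (k θ ξ y₀ δt : ℝ) (n : ℕ) : Measurable (fteChain k θ ξ y₀ δt n) := by
  induction n with
  | zero => exact measurable_const
  | succ n ih =>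
    change Measurable fun z : Fin (n + 1) → ℝ =>
      fteStep k θ ξ δt (fteChain k θ ξ y₀ δt n (Fin.init z)) (z (Fin.last n))
    unfold fteStep
    fun_prop

@[fun_prop]
lemma measurable_fteExponent (k θ ξ y₀ δt ε : ℝ) (n : ℕ) :
    Measurable (fteExponent k θ ξ y₀ δt ε n) := by
  induction n with
  | zero => exact measurable_const
  | succ n ih =>
    change Measurable fun z : Fin (n + 1) → ℝ => fteExponent k θ ξ y₀ δt ε n (Fin.init z)
      + fteExponentIncrement k ξ δt ε (fteChain k θ ξ y₀ δt n (Fin.init z)) (z (Fin.last n))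
    unfold fteExponentIncrement
    fun_prop

lemma drift_add_half_sq_volatility_nonpos {k ξ δt ε y : ℝ} (hε : 0 ≤ ε)
    (hεk : ε * ξ ^ 2 ≤ 2 * k) (hδt : 0 ≤ δt) :
    -(ε * k * δt * max y 0) + (ε * ξ * Real.sqrt (max y 0 * δt)) ^ 2 / 2 ≤ 0 := by
  have hy : 0 ≤ max y 0 * δt := mul_nonneg (le_max_right _ _) hδt
  rw [mul_pow, Real.sq_sqrt hy]
  nlinarith [mul_le_mul_of_nonneg_right hεk (mul_nonneg hε hy)]

section Deterministic

variable {k θ ξ y₀ δt : ℝ} {y z : ℕ → ℝ} {N : ℕ}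

lemma eq_fteChain_of_rec (hy0 : y 0 = y₀)
    (hrec : ∀ n < N, y (n + 1) = fteStep k θ ξ δt (y n) (z n)) :
    ∀ n ≤ N, y n = fteChain k θ ξ y₀ δt n (fun i => z i)
  | 0, _ => hy0
  | n + 1, hn => by rw [hrec n hn, eq_fteChain_of_rec hy0 hrec n (by omega)]; rfl

lemma sum_fteExponentIncrement_eq (ε : ℝ) (hy0 : y 0 = y₀)
    (hrec : ∀ n < N, y (n + 1) = fteStep k θ ξ δt (y n) (z n)) :
    ∀ n ≤ N, ∑ i ∈ Finset.range n, fteExponentIncrement k ξ δt ε (y i) (z i)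
      = fteExponent k θ ξ y₀ δt ε n (fun i => z i)
  | 0, _ => rfl
  | n + 1, hn => by
    rw [Finset.sum_range_succ, sum_fteExponentIncrement_eq ε hy0 hrec n (by omega),
      eq_fteChain_of_rec hy0 hrec n (by omega)]
    rfl

end Deterministic

lemma lintegral_exp_fteExponent_succ_le {Ω : Type*} [MeasurableSpace Ω] {μ : Measure Ω}
    [IsProbabilityMeasure μ] {k θ ξ y₀ δt ε : ℝ} {Z : ℕ → Ω → ℝ} {N n : ℕ}
    (hZ : iIndepFun (fun i : Fin N => Z i) μ)
    (hZlaw : ∀ i : Fin N, μ.map (Z i) = gaussianReal 0 1) (hn : n < N)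
    (hε : 0 ≤ ε) (hεk : ε * ξ ^ 2 ≤ 2 * k) (hδt : 0 ≤ δt) :
    ∫⁻ ω, ENNReal.ofReal (Real.exp (fteExponent k θ ξ y₀ δt ε (n + 1) fun i => Z i ω)) ∂μ
      ≤ ∫⁻ ω, ENNReal.ofReal (Real.exp (fteExponent k θ ξ y₀ δt ε n fun i => Z i ω)) ∂μ := by
  have hZm : ∀ i : Fin N, AEMeasurable (Z i) μ := fun i =>
    aemeasurable_of_map_neZero (hZlaw i ▸ inferInstance)
  let y : (Fin n → ℝ) → ℝ := fun v => max (fteChain k θ ξ y₀ δt n v) 0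
  have key := lintegral_exp_add_mul_of_indepFun_gaussianReal (X := fun ω (i : Fin n) => Z i ω)
    (aemeasurable_pi_lambda _ fun i => hZm ⟨i, i.2.trans hn⟩)
    (hZ.indepFun_prefix_of_lt hZm hn) (hZlaw ⟨n, hn⟩)
    (c := fun v => fteExponent k θ ξ y₀ δt ε n v + -(ε * k * δt * y v))
    (a := fun v => ε * ξ * Real.sqrt (y v * δt)) (by fun_prop) (by fun_prop)
  have hsplit : ∀ ω, (fteExponent k θ ξ y₀ δt ε (n + 1) fun i => Z i ω)
      = (fteExponent k θ ξ y₀ δt ε n fun i => Z i ω) + -(ε * k * δt * y fun i => Z i ω)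
        + ε * ξ * Real.sqrt ((y fun i => Z i ω) * δt) * Z n ω :=
    fun ω => (add_assoc _ _ _).symm
  simp_rw [hsplit]
  refine (le_of_eq key).trans (lintegral_mono fun ω => ?_)
  simp only [zero_mul, add_zero, NNReal.coe_one, one_mul]
  gcongr
  linarith [drift_add_half_sq_volatility_nonpos
    (y := fteChain k θ ξ y₀ δt n fun i => Z i ω) hε hεk hδt]

theorem stmt_12_general {Ω : Type*} [MeasureSpace Ω] [IsProbabilityMeasure (ℙ : Measure Ω)]
    (k θ ξ y₀ T : ℝ) (hT : 0 < T)
    (N : ℕ) (δt : ℝ) (hδt : δt = T / N)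
    (Z : ℕ → Ω → ℝ)
    (hZindep : iIndepFun
        (fun i : Fin N => Z i) ℙ)
    (hZlaw : ∀ i : Fin N, Measure.map (Z i) ℙ = gaussianReal 0 1)
    (Y : ℕ → Ω → ℝ) (hY0 : ∀ ω, Y 0 ω = y₀)
    (hYrec : ∀ n < N, ∀ ω, Y (n + 1) ω
        = Y n ω + k * (θ - max (Y n ω) 0) * δt
          + ξ * Real.sqrt (max (Y n ω) 0) * Real.sqrt δt * Z n ω)
    (ε : ℝ) (hε : 0 < ε) (hεk : ε * ξ ^ 2 ≤ 2 * k) :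
    ∀ n ≤ N, ∫⁻ ω, ENNReal.ofReal
        (Real.exp (∑ i ∈ Finset.range n,
          (-(ε * k * δt * max (Y i ω) 0)
            + ε * ξ * Real.sqrt (max (Y i ω) 0 * δt) * Z i ω))) ∂ℙ ≤ 1 := by
  have hδt0 : 0 ≤ δt := hδt ▸ div_nonneg hT.le N.cast_nonneg
  have hbound : ∀ n ≤ N,
      ∫⁻ ω, ENNReal.ofReal (Real.exp (fteExponent k θ ξ y₀ δt ε n fun i => Z i ω)) ∂ℙ ≤ 1 := by
    intro n hn
    induction n with
    | zero => simp [fteExponent]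
    | succ n ih =>
      exact (lintegral_exp_fteExponent_succ_le hZindep hZlaw hn hε.le hεk hδt0).trans
        (ih (by omega))
  intro n hn
  convert hbound n hn using 5 with ω
  exact sum_fteExponentIncrement_eq (y := fun m => Y m ω) (z := fun m => Z m ω) ε (hY0 ω)
    (fun m hm => hYrec m hm ω) n hn

/-- Discrete supermartingale-type exponential estimate (3.20.3) for the full truncation
Euler chain of the CIR process: with `εξ² ≤ 2k` and
`Γ_n = exp(Σ_{i<n}(−εkδt ỹ_i⁺ + εξ√(ỹ_i⁺ δt) Z_i))` one has `E[Γ_n] ≤ 1`. -/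
theorem stmt_12 {Ω : Type*} [MeasureSpace Ω] [IsProbabilityMeasure (ℙ : Measure Ω)]
    (k θ ξ y₀ T : ℝ) (hk : 0 < k) (hθ : 0 < θ) (hξ : 0 < ξ) (hy₀ : 0 < y₀) (hT : 0 < T)
    (N : ℕ) (hN : 1 ≤ N) (δt : ℝ) (hδt : δt = T / N)
    (Z : ℕ → Ω → ℝ)
    (hZindep : iIndepFun
        (fun i : Fin N => Z i) ℙ)
    (hZlaw : ∀ i : Fin N, Measure.map (Z i) ℙ = gaussianReal 0 1)
    (Y : ℕ → Ω → ℝ) (hY0 : ∀ ω, Y 0 ω = y₀)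
    (hYrec : ∀ n < N, ∀ ω, Y (n + 1) ω
        = Y n ω + k * (θ - max (Y n ω) 0) * δt
          + ξ * Real.sqrt (max (Y n ω) 0) * Real.sqrt δt * Z n ω)
    (ε : ℝ) (hε : 0 < ε) (hεk : ε * ξ ^ 2 ≤ 2 * k) :
    ∀ n ≤ N, ∫⁻ ω, ENNReal.ofReal
        (Real.exp (∑ i ∈ Finset.range n,
          (-(ε * k * δt * max (Y i ω) 0)
            + ε * ξ * Real.sqrt (max (Y i ω) 0 * δt) * Z i ω))) ∂ℙ ≤ 1 :=
  stmt_12_general k θ ξ y₀ T hT N δt hδt Z hZindep hZlaw Y hY0 hYrec ε hε hεk
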